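/- arXiv:1403.3390 — 8 statements merged into one kernel-verified Lean document; each statement's English description precedes it below -/
import Mathlib

section
/- Let H be a real Hilbert space, C a nonempty closed convex subset of H, α > 0, and A : C → H an α-inverse strongly monotone mapping. Let z ∈ C be a solution of the variational inequality VI(C,A). Then for every x ∈ C and every λ with 0 < λ < 2α, ‖P_C(x − λAx) − z‖² ≤ ‖x − z‖² + λ(λ − 2α)‖Ax − Az‖² ≤ ‖x − z‖². -/
open RealInnerProductSpace

/-- Basic contraction estimate for the projected gradient step with an α-inverse strongly
monotone mapping, at a solution `z` of the variational inequality. -/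
theorem stmt_2 {H : Type*} [NormedAddCommGroup H] [InnerProductSpace ℝ H] [CompleteSpace H]
    (C : Set H) (hC : C.Nonempty) (hCclosed : IsClosed C) (hCconvex : Convex ℝ C)
    (α : ℝ) (hα : 0 < α) (A : H → H)
    (hA : ∀ x ∈ C, ∀ y ∈ C, α * ‖A x - A y‖ ^ 2 ≤ ⟪A x - A y, x - y⟫)
    (P : H → H) (hPmem : ∀ x, P x ∈ C)
    (hPchar : ∀ x, ∀ y ∈ C, ⟪x - P x, y - P x⟫ ≤ 0)
    (z : H) (hz : z ∈ C) (hzsol : ∀ y ∈ C, 0 ≤ ⟪A z, y - z⟫)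
    (x : H) (hx : x ∈ C) (lam : ℝ) (hlam0 : 0 < lam) (hlam2 : lam < 2 * α) :
    ‖P (x - lam • A x) - z‖ ^ 2 ≤ ‖x - z‖ ^ 2 + lam * (lam - 2 * α) * ‖A x - A z‖ ^ 2 ∧
      ‖x - z‖ ^ 2 + lam * (lam - 2 * α) * ‖A x - A z‖ ^ 2 ≤ ‖x - z‖ ^ 2 := by
  set u := x - lam • A x with hu
  set p := P u with hp
  set w := (x - z) - lam • (A x - A z) with hw
  -- projection inequality
  have h1 : ⟪u - p, z - p⟫ ≤ 0 := hPchar u z hz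
  have h2 : 0 ≤ ⟪A z, p - z⟫ := hzsol p (hPmem u)
  have hmono : α * ‖A x - A z‖ ^ 2 ≤ ⟪A x - A z, x - z⟫ := hA x hx z hz
  -- step 1 : ‖p - z‖² ≤ ⟪w, p - z⟫
  have key : ‖p - z‖ ^ 2 ≤ ⟪w, p - z⟫ := by
    have expand : ⟪u - z, p - z⟫ = ⟪w, p - z⟫ - lam * ⟪A z, p - z⟫ := by
      have : u - z = w - lam • A z := by
        rw [hu, hw]; module
      rw [this, inner_sub_left, real_inner_smul_left]
    have e2 : ⟪u - z, p - z⟫ = -⟪u - p, z - p⟫ + ‖p - z‖ ^ 2 := by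
      have : u - z = (u - p) + (p - z) := by abel
      rw [this, inner_add_left, real_inner_self_eq_norm_sq]
      have : (u - p : H) - 0 = u - p := by abel
      rw [show (z - p : H) = -(p - z) by abel, inner_neg_right]
      ring
    nlinarith [mul_nonneg hlam0.le h2]
  -- step 2 : ‖p - z‖ ≤ ‖w‖
  have hle : ‖p - z‖ ≤ ‖w‖ := by
    rcases eq_or_lt_of_le (norm_nonneg (p - z)) with h0 | h0
    · rw [← h0]; exact norm_nonneg w
    · have cs : ⟪w, p - z⟫ ≤ ‖w‖ * ‖p - z‖ := real_inner_le_norm w (p - z)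
      have : ‖p - z‖ ^ 2 ≤ ‖w‖ * ‖p - z‖ := key.trans cs
      nlinarith
  -- step 3 : expand ‖w‖²
  have hwsq : ‖w‖ ^ 2 = ‖x - z‖ ^ 2 - 2 * lam * ⟪A x - A z, x - z⟫
      + lam ^ 2 * ‖A x - A z‖ ^ 2 := by
    rw [hw, norm_sub_sq_real, real_inner_smul_right, norm_smul, Real.norm_eq_abs,
      abs_of_pos hlam0, mul_pow, real_inner_comm]
    ring
  have hwle : ‖w‖ ^ 2 ≤ ‖x - z‖ ^ 2 + lam * (lam - 2 * α) * ‖A x - A z‖ ^ 2 := by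
    nlinarith [mul_nonneg hlam0.le (mul_nonneg hlam0.le (sq_nonneg ‖A x - A z‖))]
  constructor
  · calc ‖p - z‖ ^ 2 ≤ ‖w‖ ^ 2 := by nlinarith [norm_nonneg (p - z), norm_nonneg w]
    _ ≤ _ := hwle
  · nlinarith [mul_nonneg (mul_pos hlam0 (by linarith : (0:ℝ) < 2*α - lam)).le (sq_nonneg ‖A x - A z‖)]
end

section
/- Let H be a real Hilbert space, C a nonempty closed convex subset of H, α > 0, and A : C → H an α-inverse strongly monotone mapping. Let {W_n} be a sequence of nonexpansive self-mappings of C, and let z ∈ C be a common fixed point of all W_n that also solves the variational inequality VI(C,A). Let {λ_n} ⊂ [a,b] with 0 < a ≤ b < 2α and {α_n} ⊂ [c,d] with 0 < c ≤ d < 1, and define, starting from x_0 ∈ C: t_n = P_C(x_n − λ_n A x_n), y_n = (1 − α_n)x_n + α_n W_n t_n, and x_{n+1} = W_n P_C(y_n − λ_n A y_n). Then ‖x_n − W_n t_n‖ → 0 and ‖x_n − y_n‖ → 0 as n → ∞. -/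
/-!
Fix `z`. Since `z` solves the variational inequality, it is a fixed point of every projected
gradient step `u ↦ P (u - λ • A u)`, and for `0 ≤ λ ≤ 2α` inverse strong monotonicity makes the
gradient step, hence the projected one, nonexpansive towards `z`. The identity
`‖(1 - s) p + s q - r‖² = (1 - s)‖p - r‖² + s‖q - r‖² - s(1 - s)‖p - q‖²` then gives the Fejér
inequality `‖xₙ₊₁ - z‖² + c(1 - d)‖xₙ - Wₙtₙ‖² ≤ ‖xₙ - z‖²`, which forces `‖xₙ - Wₙtₙ‖ → 0`;
finally `xₙ - yₙ = αₙ (xₙ - Wₙtₙ)`.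
-/

open Filter Topology RealInnerProductSpace

theorem tendsto_zero_of_add_const_mul_le {φ u : ℕ → ℝ} {κ : ℝ} (hκ : 0 < κ)
    (hφ : ∀ n, 0 ≤ φ n) (hu : ∀ n, 0 ≤ u n) (h : ∀ n, φ (n + 1) + κ * u n ≤ φ n) :
    Tendsto u atTop (𝓝 0) := by
  have partial_sum : ∀ n, κ * ∑ i ∈ Finset.range n, u i ≤ φ 0 - φ n := by
    intro n
    induction n with
    | zero => simp
    | succ n ih => rw [Finset.sum_range_succ, mul_add]; linarith [h n]
  refine (summable_of_sum_range_le hu (c := φ 0 / κ) fun n => ?_).tendsto_atTop_zero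
  rw [le_div_iff₀' hκ]
  linarith [partial_sum n, hφ n]

section InnerProductSpace

variable {H : Type*} [NormedAddCommGroup H] [InnerProductSpace ℝ H]

theorem norm_convexComb_sub_sq (p q r : H) (s : ℝ) :
    ‖(1 - s) • p + s • q - r‖ ^ 2
      = (1 - s) * ‖p - r‖ ^ 2 + s * ‖q - r‖ ^ 2 - s * (1 - s) * ‖p - q‖ ^ 2 := by
  rw [show (1 - s) • p + s • q - r = (1 - s) • (p - r) + s • (q - r) by module,
    show p - q = (p - r) - (q - r) by abel]
  simp only [norm_add_sq_real, norm_sub_sq_real, norm_smul, real_inner_smul_left,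
    real_inner_smul_right, Real.norm_eq_abs, mul_pow, sq_abs]
  ring

theorem norm_convexComb_sub_sq_le {p q r : H} {s c d : ℝ} (hqr : ‖q - r‖ ≤ ‖p - r‖)
    (hs : s ∈ Set.Icc c d) (hc : 0 ≤ c) (hd : d ≤ 1) :
    ‖(1 - s) • p + s • q - r‖ ^ 2 ≤ ‖p - r‖ ^ 2 - c * (1 - d) * ‖p - q‖ ^ 2 := by
  obtain ⟨hcs, hsd⟩ := hs
  have hsq : ‖q - r‖ ^ 2 ≤ ‖p - r‖ ^ 2 := pow_le_pow_left₀ (norm_nonneg _) hqr 2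
  have hcoef : c * (1 - d) ≤ s * (1 - s) :=
    mul_le_mul hcs (by linarith) (by linarith) (by linarith)
  rw [norm_convexComb_sub_sq]
  nlinarith [sq_nonneg ‖p - q‖]

theorem norm_sub_smul_le_of_inverseStronglyMonotone {e g : H} {α l : ℝ}
    (hg : α * ‖g‖ ^ 2 ≤ ⟪g, e⟫) (hl₀ : 0 ≤ l) (hl : l ≤ 2 * α) :
    ‖e - l • g‖ ≤ ‖e‖ := by
  have hsq : ‖e - l • g‖ ^ 2 = ‖e‖ ^ 2 - 2 * l * ⟪g, e⟫ + l ^ 2 * ‖g‖ ^ 2 := by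
    rw [norm_sub_sq_real, norm_smul, real_inner_smul_right, real_inner_comm, Real.norm_eq_abs,
      mul_pow, sq_abs]
    ring
  refine pow_le_pow_iff_left₀ (norm_nonneg _) (norm_nonneg _) two_ne_zero |>.mp ?_
  rw [hsq]
  nlinarith [mul_nonneg hl₀ (sub_nonneg.mpr hg), mul_nonneg (mul_nonneg hl₀ (sub_nonneg.mpr hl))
    (sq_nonneg ‖g‖)]

theorem norm_sub_le_of_inner_le_zero {u v pu pv : H} (hu : ⟪u - pu, pv - pu⟫ ≤ 0)
    (hv : ⟪v - pv, pu - pv⟫ ≤ 0) : ‖pu - pv‖ ≤ ‖u - v‖ := by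
  have hfirm : ‖pu - pv‖ ^ 2 ≤ ⟪u - v, pu - pv⟫ := by
    have hsum : ⟪u - v, pu - pv⟫ - ‖pu - pv‖ ^ 2 = -⟪u - pu, pv - pu⟫ - ⟪v - pv, pu - pv⟫ := by
      rw [← real_inner_self_eq_norm_sq]
      simp only [inner_sub_left, inner_sub_right, real_inner_comm pu pv]
      ring
    linarith
  have hcs := real_inner_le_norm (u - v) (pu - pv)
  nlinarith [norm_nonneg (pu - pv), norm_nonneg (u - v)]

variable {C : Set H} {P : H → H}

theorem proj_sub_smul_eq_self_of_variationalInequality (hPmem : ∀ x, P x ∈ C)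
    (hPchar : ∀ x, ∀ y ∈ C, ⟪x - P x, y - P x⟫ ≤ 0) {A : H → H} {z : H} {l : ℝ} (hz : z ∈ C)
    (hzsol : ∀ y ∈ C, 0 ≤ ⟪A z, y - z⟫) (hl : 0 ≤ l) : P (z - l • A z) = z := by
  set w := P (z - l • A z)
  have hchar : ⟪z - w, z - w⟫ ≤ l * ⟪A z, z - w⟫ := by
    have := hPchar (z - l • A z) z hz
    rwa [show z - l • A z - w = (z - w) - l • A z by abel, inner_sub_left,
      real_inner_smul_left, sub_nonpos] at this
  have hvi : ⟪A z, z - w⟫ ≤ 0 := by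
    have := hzsol w (hPmem _)
    rwa [← neg_sub z w, inner_neg_right, neg_nonneg] at this
  have : ⟪z - w, z - w⟫ ≤ 0 := hchar.trans (mul_nonpos_of_nonneg_of_nonpos hl hvi)
  exact (sub_eq_zero.mp (real_inner_self_nonpos.mp this)).symm

theorem norm_proj_sub_smul_sub_le (hPmem : ∀ x, P x ∈ C)
    (hPchar : ∀ x, ∀ y ∈ C, ⟪x - P x, y - P x⟫ ≤ 0) {A : H → H} {z u : H} {α l : ℝ} (hz : z ∈ C)
    (hzsol : ∀ y ∈ C, 0 ≤ ⟪A z, y - z⟫) (hA : α * ‖A u - A z‖ ^ 2 ≤ ⟪A u - A z, u - z⟫)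
    (hl₀ : 0 ≤ l) (hl : l ≤ 2 * α) : ‖P (u - l • A u) - z‖ ≤ ‖u - z‖ := by
  conv_lhs => rw [← proj_sub_smul_eq_self_of_variationalInequality hPmem hPchar hz hzsol hl₀]
  calc ‖P (u - l • A u) - P (z - l • A z)‖
      ≤ ‖(u - l • A u) - (z - l • A z)‖ :=
        norm_sub_le_of_inner_le_zero (hPchar _ _ (hPmem _)) (hPchar _ _ (hPmem _))
    _ = ‖(u - z) - l • (A u - A z)‖ := by rw [smul_sub]; abel_nf
    _ ≤ ‖u - z‖ := norm_sub_smul_le_of_inverseStronglyMonotone hA hl₀ hl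

end InnerProductSpace

theorem stmt_5_general {H : Type*} [NormedAddCommGroup H] [InnerProductSpace ℝ H]
    (C : Set H) (hCconvex : Convex ℝ C)
    (α : ℝ) (A : H → H)
    (hA : ∀ x ∈ C, ∀ y ∈ C, α * ‖A x - A y‖ ^ 2 ≤ ⟪A x - A y, x - y⟫)
    (P : H → H) (hPmem : ∀ x, P x ∈ C)
    (hPchar : ∀ x, ∀ y ∈ C, ⟪x - P x, y - P x⟫ ≤ 0)
    (W : ℕ → H → H) (hWmap : ∀ n, ∀ x ∈ C, W n x ∈ C)
    (hWne : ∀ n, ∀ x ∈ C, ∀ y ∈ C, ‖W n x - W n y‖ ≤ ‖x - y‖)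
    (z : H) (hz : z ∈ C) (hzfix : ∀ n, W n z = z)
    (hzsol : ∀ y ∈ C, 0 ≤ ⟪A z, y - z⟫)
    (a b c d : ℝ) (ha : 0 < a) (hb : b < 2 * α)
    (hc : 0 < c) (hd : d < 1)
    (lam αn : ℕ → ℝ) (hlam : ∀ n, lam n ∈ Set.Icc a b) (hαn : ∀ n, αn n ∈ Set.Icc c d)
    (x y t : ℕ → H) (hx0 : x 0 ∈ C)
    (ht : ∀ n, t n = P (x n - lam n • A (x n)))
    (hy : ∀ n, y n = (1 - αn n) • x n + αn n • W n (t n))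
    (hx : ∀ n, x (n + 1) = W n (P (y n - lam n • A (y n)))) :
    Tendsto (fun n => ‖x n - W n (t n)‖) atTop (𝓝 0) ∧
      Tendsto (fun n => ‖x n - y n‖) atTop (𝓝 0) := by
  have hxC : ∀ n, x n ∈ C := by
    intro n
    induction n with
    | zero => exact hx0
    | succ n _ => rw [hx n]; exact hWmap n _ (hPmem _)
  have htC : ∀ n, t n ∈ C := fun n => ht n ▸ hPmem _
  have hyC : ∀ n, y n ∈ C := fun n => hy n ▸ hCconvex (hxC n) (hWmap n _ (htC n))
    (by linarith [(hαn n).2]) (by linarith [(hαn n).1]) (by ring)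
  have hWz : ∀ n, ∀ v ∈ C, ‖W n v - z‖ ≤ ‖v - z‖ := fun n v hv => by
    simpa only [hzfix n] using hWne n v hv z hz
  have hprojz : ∀ n, ∀ u ∈ C, ‖P (u - lam n • A u) - z‖ ≤ ‖u - z‖ := fun n u hu =>
    norm_proj_sub_smul_sub_le hPmem hPchar hz hzsol (hA u hu z hz) (ha.trans_le (hlam n).1).le
      (by linarith [(hlam n).2])
  have hfejer : ∀ n, ‖x (n + 1) - z‖ ^ 2 + c * (1 - d) * ‖x n - W n (t n)‖ ^ 2 ≤ ‖x n - z‖ ^ 2 := by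
    intro n
    have hWt : ‖W n (t n) - z‖ ≤ ‖x n - z‖ :=
      (hWz n _ (htC n)).trans (ht n ▸ hprojz n _ (hxC n))
    have hyz : ‖y n - z‖ ^ 2 ≤ ‖x n - z‖ ^ 2 - c * (1 - d) * ‖x n - W n (t n)‖ ^ 2 :=
      hy n ▸ norm_convexComb_sub_sq_le hWt (hαn n) hc.le hd.le
    have hxz : ‖x (n + 1) - z‖ ≤ ‖y n - z‖ :=
      hx n ▸ (hWz n _ (hPmem _)).trans (hprojz n _ (hyC n))
    linarith [pow_le_pow_left₀ (norm_nonneg _) hxz 2]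
  have hfirst : Tendsto (fun n => ‖x n - W n (t n)‖) atTop (𝓝 0) := by
    have hsq := tendsto_zero_of_add_const_mul_le (mul_pos hc (sub_pos.mpr hd))
      (fun n => sq_nonneg ‖x n - z‖) (fun n => sq_nonneg ‖x n - W n (t n)‖) hfejer
    simpa only [Real.sqrt_sq (norm_nonneg _), Real.sqrt_zero] using hsq.sqrt
  refine ⟨hfirst, squeeze_zero (fun n => norm_nonneg _) (fun n => ?_)
    (by simpa only [mul_zero] using hfirst.const_mul d)⟩
  obtain ⟨hcα, hαd⟩ := hαn n
  rw [hy n, show x n - ((1 - αn n) • x n + αn n • W n (t n)) = αn n • (x n - W n (t n)) by module,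
    norm_smul, Real.norm_of_nonneg (hc.le.trans hcα)]
  exact mul_le_mul_of_nonneg_right hαd (norm_nonneg _)

/-- For the new extragradient iteration, `‖xₙ - Wₙtₙ‖ → 0` and `‖xₙ - yₙ‖ → 0`. -/
theorem stmt_5 {H : Type*} [NormedAddCommGroup H] [InnerProductSpace ℝ H] [CompleteSpace H]
    (C : Set H) (hC : C.Nonempty) (hCclosed : IsClosed C) (hCconvex : Convex ℝ C)
    (α : ℝ) (hα : 0 < α) (A : H → H)
    (hA : ∀ x ∈ C, ∀ y ∈ C, α * ‖A x - A y‖ ^ 2 ≤ ⟪A x - A y, x - y⟫)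
    (P : H → H) (hPmem : ∀ x, P x ∈ C)
    (hPchar : ∀ x, ∀ y ∈ C, ⟪x - P x, y - P x⟫ ≤ 0)
    (W : ℕ → H → H) (hWmap : ∀ n, ∀ x ∈ C, W n x ∈ C)
    (hWne : ∀ n, ∀ x ∈ C, ∀ y ∈ C, ‖W n x - W n y‖ ≤ ‖x - y‖)
    (z : H) (hz : z ∈ C) (hzfix : ∀ n, W n z = z)
    (hzsol : ∀ y ∈ C, 0 ≤ ⟪A z, y - z⟫)
    (a b c d : ℝ) (ha : 0 < a) (hab : a ≤ b) (hb : b < 2 * α)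
    (hc : 0 < c) (hcd : c ≤ d) (hd : d < 1)
    (lam αn : ℕ → ℝ) (hlam : ∀ n, lam n ∈ Set.Icc a b) (hαn : ∀ n, αn n ∈ Set.Icc c d)
    (x y t : ℕ → H) (hx0 : x 0 ∈ C)
    (ht : ∀ n, t n = P (x n - lam n • A (x n)))
    (hy : ∀ n, y n = (1 - αn n) • x n + αn n • W n (t n))
    (hx : ∀ n, x (n + 1) = W n (P (y n - lam n • A (y n)))) :
    Tendsto (fun n => ‖x n - W n (t n)‖) atTop (𝓝 0) ∧
      Tendsto (fun n => ‖x n - y n‖) atTop (𝓝 0) :=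
  stmt_5_general C hCconvex α A hA P hPmem hPchar W hWmap hWne z hz hzfix hzsol a b c d ha hb hc hd
    lam αn hlam hαn x y t hx0 ht hy hx
end

section
/- Let H be a real Hilbert space, C a nonempty closed convex subset of H, α > 0, and A : C → H an α-inverse strongly monotone mapping. Let {W_n} be a sequence of nonexpansive self-mappings of C, and let z ∈ C be a common fixed point of all W_n that also solves the variational inequality VI(C,A). Let {λ_n} ⊂ [a,b] with 0 < a ≤ b < 2α and {α_n} ⊂ [c,d] with 0 < c ≤ d < 1, and define, starting from x_0 ∈ C: t_n = P_C(x_n − λ_n A x_n), y_n = (1 − α_n)x_n + α_n W_n t_n, and x_{n+1} = W_n P_C(y_n − λ_n A y_n). Then ‖x_n − t_n‖ → 0 and ‖W_n x_n − x_n‖ → 0 as n → ∞. -/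
open Filter Topology RealInnerProductSpace

/-! Since `z` solves the variational inequality, `P (z - λ A z) = z`, and `z` is fixed by every
`Wₙ`. Firm nonexpansiveness of `P` combined with inverse strong monotonicity of `A` then gives
the Fejér-type estimate
`‖xₙ₊₁ - z‖² + c (a (2α - b) ‖A xₙ - A z‖² + ‖(xₙ - tₙ) - λₙ (A xₙ - A z)‖²`
`+ (1 - d) ‖xₙ - Wₙ tₙ‖²) ≤ ‖xₙ - z‖²`,
so `‖xₙ - z‖` decreases and the three residuals tend to `0`. Finally
`‖xₙ - tₙ‖ ≤ ‖(xₙ - tₙ) - λₙ (A xₙ - A z)‖ + b ‖A xₙ - A z‖` and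
`‖Wₙ xₙ - xₙ‖ ≤ ‖xₙ - tₙ‖ + ‖xₙ - Wₙ tₙ‖`. -/

theorem tendsto_zero_of_succ_add_mul_le {D u : ℕ → ℝ} {κ : ℝ} (hκ : 0 < κ)
    (hD : ∀ n, 0 ≤ D n) (hu : ∀ n, 0 ≤ u n) (h : ∀ n, D (n + 1) + κ * u n ≤ D n) :
    Tendsto u atTop (𝓝 0) := by
  have hanti : Antitone D :=
    antitone_nat_of_succ_le fun n => by nlinarith [h n, mul_nonneg hκ.le (hu n)]
  have hlim : Tendsto D atTop (𝓝 (⨅ n, D n)) :=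
    tendsto_atTop_ciInf hanti ⟨0, by rintro _ ⟨n, rfl⟩; exact hD n⟩
  have hdiff : Tendsto (fun n => (D n - D (n + 1)) / κ) atTop (𝓝 0) := by
    simpa using (hlim.sub (hlim.comp (tendsto_add_atTop_nat 1))).div_const κ
  refine squeeze_zero hu (fun n => ?_) hdiff
  rw [le_div_iff₀ hκ]
  linarith [h n]

theorem tendsto_norm_zero_of_mul_sq_le {ι E : Type*} [SeminormedAddCommGroup E] {l : Filter ι}
    {v : ι → E} {Q : ι → ℝ} {κ : ℝ} (hκ : 0 < κ) (hQ : Tendsto Q l (𝓝 0))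
    (h : ∀ i, κ * ‖v i‖ ^ 2 ≤ Q i) : Tendsto (fun i => ‖v i‖) l (𝓝 0) := by
  refine squeeze_zero (fun i => norm_nonneg _) (fun i => Real.le_sqrt_of_sq_le ?_)
    (by simpa using (hQ.div_const κ).sqrt)
  rw [le_div_iff₀ hκ, mul_comm]
  exact h i

theorem norm_apply_sub_self_le {E : Type*} [SeminormedAddCommGroup E] {W : E → E} {x t : E}
    (hW : ‖W x - W t‖ ≤ ‖x - t‖) : ‖W x - x‖ ≤ ‖x - t‖ + ‖x - W t‖ := by
  calc ‖W x - x‖ ≤ ‖W x - W t‖ + ‖W t - x‖ := norm_sub_le_norm_sub_add_norm_sub _ _ _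
    _ ≤ ‖x - t‖ + ‖x - W t‖ := by rw [norm_sub_rev (W t)]; gcongr

section Hilbert

variable {H : Type*} [NormedAddCommGroup H] [InnerProductSpace ℝ H]

theorem norm_one_sub_smul_add_smul_sq (s : ℝ) (u v : H) :
    ‖(1 - s) • u + s • v‖ ^ 2
      = (1 - s) * ‖u‖ ^ 2 + s * ‖v‖ ^ 2 - s * (1 - s) * ‖u - v‖ ^ 2 := by
  rw [norm_add_sq_real, norm_sub_sq_real, norm_smul, norm_smul, real_inner_smul_left,
    real_inner_smul_right, Real.norm_eq_abs, Real.norm_eq_abs, mul_pow, mul_pow, sq_abs, sq_abs]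
  ring

theorem norm_sub_smul_sq_le {α l : ℝ} {u w : H} (hw : α * ‖w‖ ^ 2 ≤ ⟪w, u⟫) (hl : 0 ≤ l) :
    ‖u - l • w‖ ^ 2 ≤ ‖u‖ ^ 2 - l * (2 * α - l) * ‖w‖ ^ 2 := by
  rw [norm_sub_sq_real, real_inner_smul_right, norm_smul, Real.norm_eq_abs, mul_pow, sq_abs,
    real_inner_comm]
  nlinarith [mul_le_mul_of_nonneg_left hw hl]

variable {C : Set H} {P : H → H}

theorem eq_of_forall_inner_sub_nonpos (hPmem : ∀ x, P x ∈ C)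
    (hPchar : ∀ x, ∀ y ∈ C, ⟪x - P x, y - P x⟫ ≤ 0) {x p : H} (hp : p ∈ C)
    (h : ∀ y ∈ C, ⟪x - p, y - p⟫ ≤ 0) : P x = p := by
  have h1 := h (P x) (hPmem x)
  have h2 := hPchar x p hp
  have key : ‖P x - p‖ ^ 2 = ⟪x - p, P x - p⟫ + ⟪x - P x, p - P x⟫ := by
    rw [← real_inner_self_eq_norm_sq]
    simp only [inner_sub_left, inner_sub_right, real_inner_comm]
    ring
  have hnorm : ‖P x - p‖ = 0 := by nlinarith [norm_nonneg (P x - p)]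
  exact sub_eq_zero.mp (norm_eq_zero.mp hnorm)

theorem norm_sub_sq_add_norm_sub_sub_sq_le (hPmem : ∀ x, P x ∈ C)
    (hPchar : ∀ x, ∀ y ∈ C, ⟪x - P x, y - P x⟫ ≤ 0) (u v : H) :
    ‖P u - P v‖ ^ 2 + ‖(u - P u) - (v - P v)‖ ^ 2 ≤ ‖u - v‖ ^ 2 := by
  have h1 := hPchar u (P v) (hPmem v)
  have h2 := hPchar v (P u) (hPmem u)
  have hcross : ⟪P u - P v, (u - P u) - (v - P v)⟫
      = -⟪u - P u, P v - P u⟫ - ⟪v - P v, P u - P v⟫ := by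
    simp only [inner_sub_left, inner_sub_right, real_inner_comm]
    ring
  have hsplit : u - v = (P u - P v) + ((u - P u) - (v - P v)) := by abel
  rw [hsplit, norm_add_sq_real, hcross]
  linarith

theorem proj_sub_smul_eq_self (hPmem : ∀ x, P x ∈ C)
    (hPchar : ∀ x, ∀ y ∈ C, ⟪x - P x, y - P x⟫ ≤ 0) {z w : H} (hz : z ∈ C)
    (hw : ∀ y ∈ C, 0 ≤ ⟪w, y - z⟫) {l : ℝ} (hl : 0 ≤ l) : P (z - l • w) = z := by
  refine eq_of_forall_inner_sub_nonpos hPmem hPchar hz fun y hy => ?_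
  rw [sub_sub_cancel_left, inner_neg_left, real_inner_smul_left, neg_nonpos]
  exact mul_nonneg hl (hw y hy)

theorem norm_proj_sub_smul_sub_sq_add_le (hPmem : ∀ x, P x ∈ C)
    (hPchar : ∀ x, ∀ y ∈ C, ⟪x - P x, y - P x⟫ ≤ 0) {α l : ℝ} {A : H → H} {u z : H}
    (hA : α * ‖A u - A z‖ ^ 2 ≤ ⟪A u - A z, u - z⟫) (hPz : P (z - l • A z) = z) (hl : 0 ≤ l) :
    ‖P (u - l • A u) - z‖ ^ 2 + ‖(u - P (u - l • A u)) - l • (A u - A z)‖ ^ 2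
      ≤ ‖u - z‖ ^ 2 - l * (2 * α - l) * ‖A u - A z‖ ^ 2 := by
  have hfirm := norm_sub_sq_add_norm_sub_sub_sq_le hPmem hPchar (u - l • A u) (z - l • A z)
  have hdiff : (u - l • A u) - (z - l • A z) = (u - z) - l • (A u - A z) := by
    rw [smul_sub]; abel
  have hres : (u - l • A u - P (u - l • A u)) - (z - l • A z - z)
      = (u - P (u - l • A u)) - l • (A u - A z) := by
    rw [smul_sub]; abel
  rw [hPz, hdiff, hres] at hfirm
  linarith [norm_sub_smul_sq_le hA hl]

end Hilbert

theorem norm_extragradient_step_sub_sq_add_le {H : Type*} [NormedAddCommGroup H]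
    [InnerProductSpace ℝ H] {C : Set H} (hCconvex : Convex ℝ C) {P : H → H}
    (hPmem : ∀ x, P x ∈ C) (hPchar : ∀ x, ∀ y ∈ C, ⟪x - P x, y - P x⟫ ≤ 0) {α : ℝ} {A : H → H}
    (hA : ∀ x ∈ C, ∀ y ∈ C, α * ‖A x - A y‖ ^ 2 ≤ ⟪A x - A y, x - y⟫) {W : H → H}
    (hWmap : ∀ x ∈ C, W x ∈ C) (hWne : ∀ x ∈ C, ∀ y ∈ C, ‖W x - W y‖ ≤ ‖x - y‖) {z : H}
    (hz : z ∈ C) (hzfix : W z = z) (hzsol : ∀ y ∈ C, 0 ≤ ⟪A z, y - z⟫) {l s : ℝ} (hl : 0 ≤ l)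
    (hl2 : l ≤ 2 * α) (hs0 : 0 ≤ s) (hs1 : s ≤ 1) {x t y : H} (hx : x ∈ C)
    (ht : t = P (x - l • A x)) (hy : y = (1 - s) • x + s • W t) :
    ‖W (P (y - l • A y)) - z‖ ^ 2 + s * (l * (2 * α - l) * ‖A x - A z‖ ^ 2
        + ‖(x - t) - l • (A x - A z)‖ ^ 2 + (1 - s) * ‖x - W t‖ ^ 2) ≤ ‖x - z‖ ^ 2 := by
  have htC : t ∈ C := ht ▸ hPmem _
  have hyC : y ∈ C := hy ▸ hCconvex hx (hWmap t htC) (by linarith) hs0 (by ring)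
  have hPz : P (z - l • A z) = z := proj_sub_smul_eq_self hPmem hPchar hz hzsol hl
  have hWz : ∀ u ∈ C, ‖W u - z‖ ≤ ‖u - z‖ := fun u hu => by
    simpa only [hzfix] using hWne u hu z hz
  have hest_t := norm_proj_sub_smul_sub_sq_add_le hPmem hPchar (hA x hx z hz) hPz hl
  have hest_y := norm_proj_sub_smul_sub_sq_add_le hPmem hPchar (hA y hyC z hz) hPz hl
  rw [← ht] at hest_t
  have hy_sq : ‖y - z‖ ^ 2
      = (1 - s) * ‖x - z‖ ^ 2 + s * ‖W t - z‖ ^ 2 - s * (1 - s) * ‖x - W t‖ ^ 2 := by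
    have hyz : y - z = (1 - s) • (x - z) + s • (W t - z) := by rw [hy]; module
    rw [hyz, norm_one_sub_smul_add_smul_sq, sub_sub_sub_cancel_right]
  have hWt := pow_le_pow_left₀ (norm_nonneg _) (hWz t htC) 2
  have hWy := pow_le_pow_left₀ (norm_nonneg _) (hWz _ (hPmem (y - l • A y))) 2
  have hcoef : 0 ≤ l * (2 * α - l) * ‖A y - A z‖ ^ 2 := by
    have : 0 ≤ 2 * α - l := by linarith
    positivity
  linarith [sq_nonneg ‖y - P (y - l • A y) - l • (A y - A z)‖,
    mul_le_mul_of_nonneg_left hWt hs0, mul_le_mul_of_nonneg_left hest_t hs0]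

theorem stmt_6_general {H : Type*} [NormedAddCommGroup H] [InnerProductSpace ℝ H]
    (C : Set H) (hCconvex : Convex ℝ C)
    (α : ℝ) (A : H → H)
    (hA : ∀ x ∈ C, ∀ y ∈ C, α * ‖A x - A y‖ ^ 2 ≤ ⟪A x - A y, x - y⟫)
    (P : H → H) (hPmem : ∀ x, P x ∈ C)
    (hPchar : ∀ x, ∀ y ∈ C, ⟪x - P x, y - P x⟫ ≤ 0)
    (W : ℕ → H → H) (hWmap : ∀ n, ∀ x ∈ C, W n x ∈ C)
    (hWne : ∀ n, ∀ x ∈ C, ∀ y ∈ C, ‖W n x - W n y‖ ≤ ‖x - y‖)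
    (z : H) (hz : z ∈ C) (hzfix : ∀ n, W n z = z)
    (hzsol : ∀ y ∈ C, 0 ≤ ⟪A z, y - z⟫)
    (a b c d : ℝ) (ha : 0 < a) (hb : b < 2 * α)
    (hc : 0 < c) (hd : d < 1)
    (lam αn : ℕ → ℝ) (hlam : ∀ n, lam n ∈ Set.Icc a b) (hαn : ∀ n, αn n ∈ Set.Icc c d)
    (x y t : ℕ → H) (hx0 : x 0 ∈ C)
    (ht : ∀ n, t n = P (x n - lam n • A (x n)))
    (hy : ∀ n, y n = (1 - αn n) • x n + αn n • W n (t n))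
    (hx : ∀ n, x (n + 1) = W n (P (y n - lam n • A (y n)))) :
    Tendsto (fun n => ‖x n - t n‖) atTop (𝓝 0) ∧
      Tendsto (fun n => ‖W n (x n) - x n‖) atTop (𝓝 0) := by
  have hxC : ∀ n, x n ∈ C := fun n =>
    Nat.recOn n hx0 fun n _ => hx n ▸ hWmap n _ (hPmem _)
  have hK : 0 < a * (2 * α - b) := mul_pos ha (by linarith)
  have hd0 : 0 < 1 - d := by linarith
  have hdesc : ∀ n, ‖x (n + 1) - z‖ ^ 2 + c * (a * (2 * α - b) * ‖A (x n) - A z‖ ^ 2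
      + ‖(x n - t n) - lam n • (A (x n) - A z)‖ ^ 2 + (1 - d) * ‖x n - W n (t n)‖ ^ 2)
      ≤ ‖x n - z‖ ^ 2 := fun n => by
    obtain ⟨hla, hlb⟩ := hlam n
    obtain ⟨hsc, hsd⟩ := hαn n
    refine le_trans ?_ (hx n ▸ norm_extragradient_step_sub_sq_add_le hCconvex hPmem hPchar hA
      (hWmap n) (hWne n) hz (hzfix n) hzsol (ha.le.trans hla) (by linarith) (hc.le.trans hsc)
      (by linarith) (hxC n) (ht n) (hy n))
    gcongr _ + ?_ * (?_ * (2 * α - ?_) * _ + _ + (1 - ?_) * _) <;> linarith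
  have hg0 n : 0 ≤ a * (2 * α - b) * ‖A (x n) - A z‖ ^ 2 := by positivity
  have he0 n : 0 ≤ ‖(x n - t n) - lam n • (A (x n) - A z)‖ ^ 2 := by positivity
  have hh0 n : 0 ≤ (1 - d) * ‖x n - W n (t n)‖ ^ 2 := by positivity
  have hlim := tendsto_zero_of_succ_add_mul_le hc (fun n => sq_nonneg ‖x n - z‖)
    (fun n => by linarith [hg0 n, he0 n, hh0 n]) hdesc
  have hg : Tendsto (fun n => ‖A (x n) - A z‖) atTop (𝓝 0) :=
    tendsto_norm_zero_of_mul_sq_le hK hlim fun n => by linarith [he0 n, hh0 n]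
  have he : Tendsto (fun n => ‖(x n - t n) - lam n • (A (x n) - A z)‖) atTop (𝓝 0) :=
    tendsto_norm_zero_of_mul_sq_le one_pos hlim fun n => by linarith [hg0 n, hh0 n]
  have hh : Tendsto (fun n => ‖x n - W n (t n)‖) atTop (𝓝 0) :=
    tendsto_norm_zero_of_mul_sq_le hd0 hlim fun n => by linarith [hg0 n, he0 n]
  have hxt : Tendsto (fun n => ‖x n - t n‖) atTop (𝓝 0) := by
    refine squeeze_zero (fun n => norm_nonneg _) (fun n => ?_)
      (by simpa using he.add (hg.const_mul b))
    conv_lhs => rw [← sub_add_cancel (x n - t n) (lam n • (A (x n) - A z))]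
    grw [norm_add_le, norm_smul, Real.norm_of_nonneg (ha.le.trans (hlam n).1), (hlam n).2]
  refine ⟨hxt, squeeze_zero (fun n => norm_nonneg _) (fun n => ?_) (by simpa using hxt.add hh)⟩
  exact norm_apply_sub_self_le (hWne n _ (hxC n) _ (ht n ▸ hPmem _))

/-- For the new extragradient iteration, `‖xₙ - tₙ‖ → 0` and `‖Wₙxₙ - xₙ‖ → 0`. -/
theorem stmt_6 {H : Type*} [NormedAddCommGroup H] [InnerProductSpace ℝ H] [CompleteSpace H]
    (C : Set H) (hC : C.Nonempty) (hCclosed : IsClosed C) (hCconvex : Convex ℝ C)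
    (α : ℝ) (hα : 0 < α) (A : H → H)
    (hA : ∀ x ∈ C, ∀ y ∈ C, α * ‖A x - A y‖ ^ 2 ≤ ⟪A x - A y, x - y⟫)
    (P : H → H) (hPmem : ∀ x, P x ∈ C)
    (hPchar : ∀ x, ∀ y ∈ C, ⟪x - P x, y - P x⟫ ≤ 0)
    (W : ℕ → H → H) (hWmap : ∀ n, ∀ x ∈ C, W n x ∈ C)
    (hWne : ∀ n, ∀ x ∈ C, ∀ y ∈ C, ‖W n x - W n y‖ ≤ ‖x - y‖)
    (z : H) (hz : z ∈ C) (hzfix : ∀ n, W n z = z)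
    (hzsol : ∀ y ∈ C, 0 ≤ ⟪A z, y - z⟫)
    (a b c d : ℝ) (ha : 0 < a) (hab : a ≤ b) (hb : b < 2 * α)
    (hc : 0 < c) (hcd : c ≤ d) (hd : d < 1)
    (lam αn : ℕ → ℝ) (hlam : ∀ n, lam n ∈ Set.Icc a b) (hαn : ∀ n, αn n ∈ Set.Icc c d)
    (x y t : ℕ → H) (hx0 : x 0 ∈ C)
    (ht : ∀ n, t n = P (x n - lam n • A (x n)))
    (hy : ∀ n, y n = (1 - αn n) • x n + αn n • W n (t n))
    (hx : ∀ n, x (n + 1) = W n (P (y n - lam n • A (y n)))) :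
    Tendsto (fun n => ‖x n - t n‖) atTop (𝓝 0) ∧
      Tendsto (fun n => ‖W n (x n) - x n‖) atTop (𝓝 0) :=
  stmt_6_general C hCconvex α A hA P hPmem hPchar W hWmap hWne z hz hzfix hzsol a b c d ha hb hc hd
    lam αn hlam hαn x y t hx0 ht hy hx
end

section
/- Let H be a real Hilbert space, C a nonempty closed convex subset of H, α > 0, and A : C → H an α-inverse strongly monotone mapping. Let {x_n} be a sequence in C, {λ_n} ⊂ [a,b] with 0 < a ≤ b < 2α, and set t_n = P_C(x_n − λ_n A x_n). Suppose ‖x_n − t_n‖ → 0 as n → ∞ and that some subsequence {x_{n_i}} converges weakly to a point p ∈ C. Then p is a solution of the variational inequality VI(C,A), i.e., ⟨Ap, y − p⟩ ≥ 0 for all y ∈ C. -/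
open Filter Topology RealInnerProductSpace

/-- If `‖xₙ - tₙ‖ → 0` where `tₙ = P_C(xₙ - λₙ A xₙ)` and a subsequence of `{xₙ}` converges
weakly to `p ∈ C`, then `p` solves the variational inequality `VI(C,A)`. -/
theorem stmt_7 {H : Type*} [NormedAddCommGroup H] [InnerProductSpace ℝ H] [CompleteSpace H]
    (C : Set H) (hC : C.Nonempty) (hCclosed : IsClosed C) (hCconvex : Convex ℝ C)
    (α : ℝ) (hα : 0 < α) (A : H → H)
    (hA : ∀ x ∈ C, ∀ y ∈ C, α * ‖A x - A y‖ ^ 2 ≤ ⟪A x - A y, x - y⟫)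
    (P : H → H) (hPmem : ∀ x, P x ∈ C)
    (hPchar : ∀ x, ∀ y ∈ C, ⟪x - P x, y - P x⟫ ≤ 0)
    (a b : ℝ) (ha : 0 < a) (hab : a ≤ b) (hb : b < 2 * α)
    (lam : ℕ → ℝ) (hlam : ∀ n, lam n ∈ Set.Icc a b)
    (x t : ℕ → H) (hxC : ∀ n, x n ∈ C)
    (ht : ∀ n, t n = P (x n - lam n • A (x n)))
    (hdiff : Tendsto (fun n => ‖x n - t n‖) atTop (𝓝 0))
    (p : H) (hp : p ∈ C) (φ : ℕ → ℕ) (hφ : StrictMono φ)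
    (hweak : ∀ u : H, Tendsto (fun i => ⟪x (φ i), u⟫) atTop (𝓝 ⟪p, u⟫)) :
    ∀ y ∈ C, 0 ≤ ⟪A p, y - p⟫ := by
  -- Lipschitz property of A on C
  have lip : ∀ u ∈ C, ∀ v ∈ C, ‖A u - A v‖ ≤ α⁻¹ * ‖u - v‖ := by
    intro u hu v hv
    rcases eq_or_ne (A u - A v) 0 with h0 | h0
    · simp [h0]
      positivity
    · have h1 := hA u hu v hv
      have h2 : ⟪A u - A v, u - v⟫ ≤ ‖A u - A v‖ * ‖u - v‖ := real_inner_le_norm _ _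
      have hn : 0 < ‖A u - A v‖ := norm_pos_iff.mpr h0
      rw [le_inv_mul_iff₀ hα]
      nlinarith [sq_nonneg (‖A u - A v‖)]
  -- Monotonicity
  have mono : ∀ u ∈ C, ∀ v ∈ C, 0 ≤ ⟪A u - A v, u - v⟫ := fun u hu v hv =>
    le_trans (by positivity) (hA u hu v hv)
  -- boundedness of the weakly convergent subsequence
  obtain ⟨M, hM⟩ : ∃ M, ∀ i, ‖x (φ i)‖ ≤ M := by
    obtain ⟨M, hM⟩ := banach_steinhaus (g := fun i => innerSL ℝ (x (φ i))) (fun u => by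
      obtain ⟨c, hc⟩ := ((hweak u).abs).bddAbove_range
      exact ⟨c, fun i => by
        simpa [Real.norm_eq_abs] using hc (Set.mem_range_self (f := fun i => |⟪x (φ i), u⟫|) i)⟩)
    exact ⟨M, fun i => by simpa [innerSL_apply_norm] using hM i⟩
  have htC : ∀ n, t n ∈ C := fun n => (ht n) ▸ hPmem _
  have hε : Tendsto (fun i => ‖x (φ i) - t (φ i)‖) atTop (𝓝 0) :=
    hdiff.comp hφ.tendsto_atTop
  -- Minty: ∀ y ∈ C, ⟪A y, y - p⟫ ≥ 0
  have minty : ∀ y ∈ C, 0 ≤ ⟪A y, y - p⟫ := by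
    intro y hy
    set K : ℝ := α⁻¹ + a⁻¹ with hK
    have hK0 : 0 ≤ K := by positivity
    -- per-index inequality
    have key : ∀ i, -(K * ‖x (φ i) - t (φ i)‖ * (‖y‖ + M + ‖x (φ i) - t (φ i)‖))
        ≤ ⟪A y, y - t (φ i)⟫ := by
      intro i
      set n := φ i
      set ε := ‖x n - t n‖ with hεdef
      have hε0 : 0 ≤ ε := norm_nonneg _
      have hD : ‖y - t n‖ ≤ ‖y‖ + M + ε := by
        have h1 : ‖y - t n‖ ≤ ‖y‖ + ‖t n‖ := norm_sub_le _ _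
        have h2 : ‖t n‖ ≤ ‖x n‖ + ‖x n - t n‖ := by
          have := norm_sub_le (x n) (x n - t n); simpa using this
        have := hM i
        linarith
      have hl := hlam n
      have hl0 : 0 < lam n := lt_of_lt_of_le ha hl.1
      -- projection inequality
      have hproj := hPchar (x n - lam n • A (x n)) y hy
      rw [← ht n] at hproj
      have hproj' : ⟪x n - t n, y - t n⟫ - lam n * ⟪A (x n), y - t n⟫ ≤ 0 := by
        have : x n - lam n • A (x n) - t n = (x n - t n) - lam n • A (x n) := by abel
        rw [this, inner_sub_left, real_inner_smul_left] at hproj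
        linarith
      have hAx : (lam n)⁻¹ * ⟪x n - t n, y - t n⟫ ≤ ⟪A (x n), y - t n⟫ := by
        rw [inv_mul_le_iff₀ hl0]; linarith
      -- monotonicity
      have hmono : ⟪A (t n), y - t n⟫ ≤ ⟪A y, y - t n⟫ := by
        have := mono y hy (t n) (htC n)
        rw [inner_sub_left] at this; linarith
      -- Lipschitz bound
      have hlipb : -(α⁻¹ * ε * ‖y - t n‖) ≤ ⟪A (t n) - A (x n), y - t n⟫ := by
        have h1 : |⟪A (t n) - A (x n), y - t n⟫| ≤ ‖A (t n) - A (x n)‖ * ‖y - t n‖ :=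
          abs_real_inner_le_norm _ _
        have h2 : ‖A (t n) - A (x n)‖ ≤ α⁻¹ * ε := by
          have := lip (t n) (htC n) (x n) (hxC n)
          calc ‖A (t n) - A (x n)‖ ≤ α⁻¹ * ‖t n - x n‖ := this
            _ = α⁻¹ * ε := by rw [norm_sub_rev]
        have := neg_abs_le ⟪A (t n) - A (x n), y - t n⟫
        nlinarith [norm_nonneg (y - t n)]
      have hxtb : -(a⁻¹ * ε * ‖y - t n‖) ≤ (lam n)⁻¹ * ⟪x n - t n, y - t n⟫ := by
        have h1 : |⟪x n - t n, y - t n⟫| ≤ ε * ‖y - t n‖ := by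
          simpa [hεdef] using abs_real_inner_le_norm (x n - t n) (y - t n)
        have h2 : (lam n)⁻¹ ≤ a⁻¹ := by
          exact inv_anti₀ ha hl.1
        have h3 := neg_abs_le ⟪x n - t n, y - t n⟫
        have h4 : -(ε * ‖y - t n‖) ≤ ⟪x n - t n, y - t n⟫ := by linarith
        rcases le_or_gt 0 ⟪x n - t n, y - t n⟫ with hI | hI
        · have h5 : 0 ≤ (lam n)⁻¹ * ⟪x n - t n, y - t n⟫ :=
            mul_nonneg (inv_pos.mpr hl0).le hI
          have h6 : 0 ≤ a⁻¹ * ε * ‖y - t n‖ := by positivity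
          linarith
        · have h5 := mul_le_mul_of_nonpos_right h2 hI.le
          have h6 := mul_le_mul_of_nonneg_left h4 (inv_pos.mpr ha).le
          nlinarith
      have hsum : ⟪A (t n) - A (x n), y - t n⟫ + ⟪A (x n), y - t n⟫ = ⟪A (t n), y - t n⟫ := by
        rw [inner_sub_left]; ring
      have step : -(α⁻¹ * ε * ‖y - t n‖) + -(a⁻¹ * ε * ‖y - t n‖) ≤ ⟪A y, y - t n⟫ := by
        have := add_le_add hlipb (le_trans hxtb hAx)
        rw [hsum] at this
        linarith
      have hKεD : -(K * ε * (‖y‖ + M + ε)) ≤ -(K * ε * ‖y - t n‖) := by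
        have : K * ε * ‖y - t n‖ ≤ K * ε * (‖y‖ + M + ε) := by
          apply mul_le_mul_of_nonneg_left hD (by positivity)
        linarith
      calc -(K * ε * (‖y‖ + M + ε)) ≤ -(K * ε * ‖y - t n‖) := hKεD
        _ = -(α⁻¹ * ε * ‖y - t n‖) + -(a⁻¹ * ε * ‖y - t n‖) := by rw [hK]; ring
        _ ≤ ⟪A y, y - t n⟫ := step
    -- lower bound tends to 0
    have hlb : Tendsto (fun i => -(K * ‖x (φ i) - t (φ i)‖ * (‖y‖ + M + ‖x (φ i) - t (φ i)‖)))
        atTop (𝓝 0) := by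
      have h1 : Tendsto (fun i => K * ‖x (φ i) - t (φ i)‖) atTop (𝓝 (K * 0)) :=
        hε.const_mul K
      have h2 : Tendsto (fun i => ‖y‖ + M + ‖x (φ i) - t (φ i)‖) atTop (𝓝 (‖y‖ + M + 0)) :=
        (tendsto_const_nhds).add hε
      have := (h1.mul h2).neg
      simpa using this
    -- LHS tends to ⟪A y, y - p⟫
    have hub : Tendsto (fun i => ⟪A y, y - t (φ i)⟫) atTop (𝓝 ⟪A y, y - p⟫) := by
      have hx0 : Tendsto (fun i => ⟪x (φ i) - t (φ i), A y⟫) atTop (𝓝 0) := by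
        refine squeeze_zero_norm (fun i => ?_) (by simpa using hε.mul_const ‖A y‖)
        simpa [Real.norm_eq_abs] using abs_real_inner_le_norm (x (φ i) - t (φ i)) (A y)
      have hxw := hweak (A y)
      have hmain : Tendsto (fun i => ⟪A y, y⟫ - (⟪x (φ i), A y⟫ - ⟪x (φ i) - t (φ i), A y⟫))
          atTop (𝓝 (⟪A y, y⟫ - (⟪p, A y⟫ - 0))) :=
        tendsto_const_nhds.sub (hxw.sub hx0)
      have heq : ∀ i, ⟪A y, y⟫ - (⟪x (φ i), A y⟫ - ⟪x (φ i) - t (φ i), A y⟫)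
          = ⟪A y, y - t (φ i)⟫ := by
        intro i
        rw [inner_sub_left, inner_sub_right, real_inner_comm (t (φ i)) (A y)]
        ring
      have heq2 : ⟪A y, y⟫ - (⟪p, A y⟫ - 0) = ⟪A y, y - p⟫ := by
        rw [inner_sub_right, real_inner_comm p (A y)]; ring
      rw [heq2] at hmain
      exact hmain.congr heq
    exact le_of_tendsto_of_tendsto' hlb hub key
  -- from Minty to VI
  intro y hy
  apply le_of_forall_pos_le_add
  intro ε hεp
  rcases eq_or_ne y p with rfl | hyp
  · simp; linarith
  have hyp2 : 0 < ‖y - p‖ := by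
    simpa [sub_eq_zero] using norm_sub_pos_iff.mpr hyp
  set s : ℝ := min 1 (α * ε / ‖y - p‖ ^ 2) with hs
  have hs0 : 0 < s := by
    apply lt_min one_pos
    positivity
  have hs1 : s ≤ 1 := min_le_left _ _
  set ys : H := p + s • (y - p) with hys
  have hysC : ys ∈ C := by
    have := hCconvex hp hy (by linarith : (0:ℝ) ≤ 1 - s) (le_of_lt hs0) (by ring)
    convert this using 1
    rw [hys]
    module
  have h1 : 0 ≤ ⟪A ys, ys - p⟫ := minty ys hysC
  have h2 : ys - p = s • (y - p) := by rw [hys]; abel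
  have h3 : 0 ≤ ⟪A ys, y - p⟫ := by
    rw [h2, real_inner_smul_right] at h1
    nlinarith
  have h4 : ‖A ys - A p‖ ≤ α⁻¹ * (s * ‖y - p‖) := by
    have := lip ys hysC p hp
    calc ‖A ys - A p‖ ≤ α⁻¹ * ‖ys - p‖ := this
      _ = α⁻¹ * (s * ‖y - p‖) := by rw [h2, norm_smul, Real.norm_eq_abs, abs_of_pos hs0]
  have h5 : |⟪A ys - A p, y - p⟫| ≤ α⁻¹ * (s * ‖y - p‖) * ‖y - p‖ := by
    calc |⟪A ys - A p, y - p⟫| ≤ ‖A ys - A p‖ * ‖y - p‖ := abs_real_inner_le_norm _ _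
      _ ≤ α⁻¹ * (s * ‖y - p‖) * ‖y - p‖ := by
          apply mul_le_mul_of_nonneg_right h4 (norm_nonneg _)
  have h6 : ⟪A ys, y - p⟫ = ⟪A p, y - p⟫ + ⟪A ys - A p, y - p⟫ := by
    rw [inner_sub_left]; ring
  have h7 : α⁻¹ * (s * ‖y - p‖) * ‖y - p‖ ≤ ε := by
    have hsle : s ≤ α * ε / ‖y - p‖ ^ 2 := min_le_right _ _
    have h := (le_div_iff₀ (by positivity : (0:ℝ) < ‖y - p‖ ^ 2)).mp hsle
    have heq : α⁻¹ * (s * ‖y - p‖) * ‖y - p‖ = α⁻¹ * (s * ‖y - p‖ ^ 2) := by ring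
    rw [heq]
    calc α⁻¹ * (s * ‖y - p‖ ^ 2) ≤ α⁻¹ * (α * ε) :=
          mul_le_mul_of_nonneg_left h (by positivity)
      _ = ε := by field_simp
  have h8 := neg_abs_le ⟪A ys - A p, y - p⟫
  linarith [abs_le.mp h5]
end

section
/- Let C be a nonempty closed convex subset of a real Hilbert space H and let {x_n} be a sequence in H such that for all z ∈ C and all n ≥ 0, ‖x_{n+1} − z‖ ≤ ‖x_n − z‖. Then the sequence {P_C x_n} converges strongly to some point u ∈ C. -/
open Filter Topology RealInnerProductSpace

/-- If `‖x_{n+1} - z‖ ≤ ‖x_n - z‖` for all `z ∈ C` and all `n`, then `{P_C x_n}` converges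
strongly to some `u ∈ C`. -/
theorem stmt_14 {H : Type*} [NormedAddCommGroup H] [InnerProductSpace ℝ H] [CompleteSpace H]
    (C : Set H) (hC : C.Nonempty) (hCclosed : IsClosed C) (hCconvex : Convex ℝ C)
    (P : H → H) (hPmem : ∀ x, P x ∈ C)
    (hPchar : ∀ x, ∀ y ∈ C, ⟪x - P x, y - P x⟫ ≤ 0)
    (x : ℕ → H) (hdec : ∀ z ∈ C, ∀ n : ℕ, ‖x (n + 1) - z‖ ≤ ‖x n - z‖) :
    ∃ u ∈ C, Tendsto (fun n => P (x n)) atTop (𝓝 u) := by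
  set u : ℕ → H := fun n => P (x n) with hudef
  set d : ℕ → ℝ := fun n => ‖x n - u n‖ with hddef
  -- key pythagorean inequality
  have key : ∀ (a : H), ∀ y ∈ C, ‖a - P a‖ ^ 2 + ‖y - P a‖ ^ 2 ≤ ‖a - y‖ ^ 2 := by
    intro a y hy
    have h1 : a - y = (a - P a) - (y - P a) := by abel
    have h2 : ‖a - y‖ ^ 2 = ‖a - P a‖ ^ 2 - 2 * ⟪a - P a, y - P a⟫ + ‖y - P a‖ ^ 2 := by
      rw [h1]; exact norm_sub_sq_real _ _
    have h3 := hPchar a y hy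
    nlinarith
  have hmono : ∀ z ∈ C, ∀ {n m : ℕ}, n ≤ m → ‖x m - z‖ ≤ ‖x n - z‖ := by
    intro z hz n m hnm
    have ha : Antitone (fun k => ‖x k - z‖) := antitone_nat_of_succ_le (fun k => hdec z hz k)
    exact ha hnm
  have hproj : ∀ (a : H), ∀ y ∈ C, ‖a - P a‖ ≤ ‖a - y‖ := by
    intro a y hy
    have := key a y hy
    have h0 : (0:ℝ) ≤ ‖a - y‖ := norm_nonneg _
    nlinarith [norm_nonneg (a - P a), norm_nonneg (y - P a)]
  have hdanti : ∀ {n m : ℕ}, n ≤ m → d m ≤ d n := by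
    intro n m h
    calc d m ≤ ‖x m - u n‖ := hproj (x m) (u n) (hPmem _)
    _ ≤ ‖x n - u n‖ := hmono _ (hPmem _) h
  have hdnonneg : ∀ n, 0 ≤ d n := fun n => norm_nonneg _
  -- key Cauchy estimate
  have hcau : ∀ {n m : ℕ}, n ≤ m → ‖u m - u n‖ ^ 2 ≤ d n ^ 2 - d m ^ 2 := by
    intro n m h
    have h1 := key (x m) (u n) (hPmem (x n))
    have h2' : ‖x m - u n‖ ≤ d n := hmono _ (hPmem _) h
    have e1 : ‖x m - P (x m)‖ = d m := rfl
    have e3 : ‖u n - P (x m)‖ = ‖u m - u n‖ := norm_sub_rev _ _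
    rw [e1, e3] at h1
    nlinarith [norm_nonneg (x m - u n), hdnonneg n, hdnonneg m]
  -- d^2 converges, hence Cauchy
  have hd2anti : Antitone (fun n => d n ^ 2) := by
    intro n m h
    have := hdanti h
    dsimp only
    nlinarith [hdnonneg m, hdnonneg n]
  have hd2bdd : BddBelow (Set.range (fun n => d n ^ 2)) := by
    refine ⟨0, ?_⟩
    rintro _ ⟨n, rfl⟩
    positivity
  have hd2tend : Tendsto (fun n => d n ^ 2) atTop (𝓝 (⨅ n, d n ^ 2)) :=
    tendsto_atTop_ciInf hd2anti hd2bdd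
  have hd2cauchy : CauchySeq (fun n => d n ^ 2) := hd2tend.cauchySeq
  have hucauchy : CauchySeq u := by
    rw [Metric.cauchySeq_iff]
    intro ε hε
    obtain ⟨N, hN⟩ := Metric.cauchySeq_iff.1 hd2cauchy (ε ^ 2) (by positivity)
    refine ⟨N, fun m hm n hn => ?_⟩
    rcases le_total n m with h | h
    · have h1 := hcau h
      have h2 := hN n hn m hm
      rw [Real.dist_eq] at h2
      have h3 : ‖u m - u n‖ ^ 2 < ε ^ 2 := by
        have := abs_lt.1 h2
        nlinarith
      have : ‖u m - u n‖ < ε := by nlinarith [norm_nonneg (u m - u n)]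
      rwa [dist_eq_norm]
    · have h1 := hcau h
      have h2 := hN m hm n hn
      rw [Real.dist_eq] at h2
      have h3 : ‖u n - u m‖ ^ 2 < ε ^ 2 := by
        have := abs_lt.1 h2
        nlinarith
      have : ‖u n - u m‖ < ε := by nlinarith [norm_nonneg (u n - u m)]
      rw [dist_eq_norm, ← norm_sub_rev]
      exact this
  obtain ⟨l, hl⟩ := cauchySeq_tendsto_of_complete hucauchy
  refine ⟨l, ?_, hl⟩
  exact hCclosed.mem_of_tendsto hl (Eventually.of_forall fun n => hPmem _)
end

section
/- Let C be a nonempty closed convex subset of a real Hilbert space H and let T : C → C be a nonexpansive mapping with F(T) ≠ ∅. Then I − T is demiclosed: whenever {x_n} is a sequence in C converging weakly to some x ∈ C and the sequence {x_n − T x_n} converges strongly to some y ∈ H, it follows that x − Tx = y. -/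
open Filter Topology RealInnerProductSpace

/-- Demiclosedness of `I - T` for a nonexpansive mapping `T` with a fixed point: if
`xₙ ⇀ x` in `C` and `xₙ - Txₙ → y` strongly, then `x - Tx = y`. -/
theorem stmt_15 {H : Type*} [NormedAddCommGroup H] [InnerProductSpace ℝ H] [CompleteSpace H]
    (C : Set H) (hC : C.Nonempty) (hCclosed : IsClosed C) (hCconvex : Convex ℝ C)
    (T : H → H) (hTmap : ∀ x ∈ C, T x ∈ C)
    (hTne : ∀ x ∈ C, ∀ y ∈ C, ‖T x - T y‖ ≤ ‖x - y‖)
    (hF : ∃ z ∈ C, T z = z)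
    (x : ℕ → H) (hxC : ∀ n, x n ∈ C) (p : H) (hp : p ∈ C)
    (hweak : ∀ u : H, Tendsto (fun n => ⟪x n, u⟫) atTop (𝓝 ⟪p, u⟫))
    (y : H) (hstrong : Tendsto (fun n => x n - T (x n)) atTop (𝓝 y)) :
    p - T p = y := by
  set u : ℕ → H := fun n => x n - T (x n) with hu
  -- boundedness of the weakly convergent sequence via Banach–Steinhaus
  obtain ⟨M, hM⟩ : ∃ M, ∀ n, ‖x n‖ ≤ M := by
    have hpt : ∀ v : H, ∃ c, ∀ n, ‖(innerSL ℝ (x n)) v‖ ≤ c := by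
      intro v
      obtain ⟨c, hc⟩ := ((hweak v).norm).bddAbove_range
      exact ⟨c, fun n => hc ⟨n, rfl⟩⟩
    obtain ⟨M, hM⟩ := banach_steinhaus hpt
    exact ⟨M, fun n => by simpa using hM n⟩
  -- the weak limit of x n - p is 0
  have hweak0 : ∀ v : H, Tendsto (fun n => ⟪x n - p, v⟫) atTop (𝓝 0) := by
    intro v
    have := (hweak v).sub (tendsto_const_nhds (x := ⟪p, v⟫))
    simpa [inner_sub_left] using this
  -- the key inequality
  have hineq : ∀ n, 2 * ⟪x n - p, p - T p - u n⟫ + ‖p - T p - u n‖ ^ 2 ≤ 0 := by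
    intro n
    have h1 : ‖T (x n) - T p‖ ≤ ‖x n - p‖ := hTne (x n) (hxC n) p hp
    have h2 : ‖T (x n) - T p‖ ^ 2 ≤ ‖x n - p‖ ^ 2 := by
      have := mul_self_le_mul_self (norm_nonneg _) h1
      nlinarith
    have h3 : T (x n) - T p = (x n - p) + (p - T p - u n) := by
      simp only [hu]; abel
    have h4 : ‖(x n - p) + (p - T p - u n)‖ ^ 2
        = ‖x n - p‖ ^ 2 + 2 * ⟪x n - p, p - T p - u n⟫ + ‖p - T p - u n‖ ^ 2 := by
      rw [norm_add_sq_real]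
    rw [h3, h4] at h2
    linarith
  -- convergence of the left side
  have hun : Tendsto (fun n => y - u n) atTop (𝓝 0) := by
    simpa using (tendsto_const_nhds (x := y)).sub hstrong
  have hterm2 : Tendsto (fun n => ⟪x n - p, y - u n⟫) atTop (𝓝 0) := by
    apply squeeze_zero_norm (a := fun n => (M + ‖p‖) * ‖y - u n‖)
    · intro n
      calc ‖⟪x n - p, y - u n⟫‖ ≤ ‖x n - p‖ * ‖y - u n‖ := norm_inner_le_norm _ _
        _ ≤ (M + ‖p‖) * ‖y - u n‖ := by
            apply mul_le_mul_of_nonneg_right _ (norm_nonneg _)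
            calc ‖x n - p‖ ≤ ‖x n‖ + ‖p‖ := norm_sub_le _ _
              _ ≤ M + ‖p‖ := by linarith [hM n]
    · simpa using tendsto_const_nhds.mul hun.norm
  have hterm1 : Tendsto (fun n => ⟪x n - p, p - T p - y⟫) atTop (𝓝 0) := hweak0 _
  have hinner : Tendsto (fun n => ⟪x n - p, p - T p - u n⟫) atTop (𝓝 0) := by
    have := hterm1.add hterm2
    have heq : ∀ n, ⟪x n - p, p - T p - u n⟫
        = ⟪x n - p, p - T p - y⟫ + ⟪x n - p, y - u n⟫ := by
      intro n
      rw [← inner_add_right]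
      congr 1
      abel
    simpa [heq] using this
  have hnorm : Tendsto (fun n => ‖p - T p - u n‖ ^ 2) atTop (𝓝 (‖p - T p - y‖ ^ 2)) := by
    have h1 : Tendsto (fun n => p - T p - u n) atTop (𝓝 (p - T p - y)) :=
      tendsto_const_nhds.sub hstrong
    exact (h1.norm).pow 2
  have hlim : Tendsto (fun n => 2 * ⟪x n - p, p - T p - u n⟫ + ‖p - T p - u n‖ ^ 2)
      atTop (𝓝 (‖p - T p - y‖ ^ 2)) := by
    simpa using (tendsto_const_nhds.mul hinner).add hnorm
  have hle : ‖p - T p - y‖ ^ 2 ≤ 0 := le_of_tendsto hlim (Eventually.of_forall hineq)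
  have : ‖p - T p - y‖ = 0 := by nlinarith [norm_nonneg (p - T p - y)]
  have h0 : p - T p - y = 0 := by simpa using this
  exact sub_eq_zero.mp h0
end

section
/- Let H be a real Hilbert space, let {α_n} be a sequence of real numbers with 0 < a ≤ α_n ≤ b < 1 for all n ≥ 0, and let {x_n} and {y_n} be sequences in H such that limsup_{n→∞} ‖x_n‖ ≤ c, limsup_{n→∞} ‖y_n‖ ≤ c, and lim_{n→∞} ‖α_n x_n + (1 − α_n) y_n‖ = c for some c > 0. Then lim_{n→∞} ‖x_n − y_n‖ = 0. -/
open Filter Topology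

/-!
In a Hilbert space, `‖α u + (1 - α) v‖² = α ‖u‖² + (1 - α) ‖v‖² - α (1 - α) ‖u - v‖²`, so with
`mₙ = max ‖xₙ‖ ‖yₙ‖` we get `a (1 - b) ‖xₙ - yₙ‖² ≤ mₙ² - ‖αₙ xₙ + (1 - αₙ) yₙ‖²`.
Since `‖αₙ xₙ + (1 - αₙ) yₙ‖ ≤ mₙ` and `limsup mₙ ≤ c`, the convergence of the convex
combinations to `c` forces `mₙ → c`, so the right-hand side tends to `c² - c² = 0`.
-/

section ConvexCombination

variable {H : Type*} [NormedAddCommGroup H] [InnerProductSpace ℝ H]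

theorem norm_smul_add_one_sub_smul_sq (α : ℝ) (u v : H) :
    ‖α • u + (1 - α) • v‖ ^ 2
      = α * ‖u‖ ^ 2 + (1 - α) * ‖v‖ ^ 2 - α * (1 - α) * ‖u - v‖ ^ 2 := by
  simp only [← real_inner_self_eq_norm_sq, inner_add_left, inner_add_right, inner_sub_left,
    inner_sub_right, real_inner_smul_left, real_inner_smul_right, real_inner_comm u v]
  ring

theorem mul_one_sub_mul_norm_sub_sq_le {α : ℝ} (h₀ : 0 ≤ α) (h₁ : α ≤ 1) (u v : H) :
    α * (1 - α) * ‖u - v‖ ^ 2 ≤ max ‖u‖ ‖v‖ ^ 2 - ‖α • u + (1 - α) • v‖ ^ 2 := by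
  have hu : ‖u‖ ^ 2 ≤ max ‖u‖ ‖v‖ ^ 2 := by gcongr; exact le_max_left _ _
  have hv : ‖v‖ ^ 2 ≤ max ‖u‖ ‖v‖ ^ 2 := by gcongr; exact le_max_right _ _
  rw [norm_smul_add_one_sub_smul_sq]
  nlinarith

end ConvexCombination

theorem norm_smul_add_one_sub_smul_le_max {E : Type*} [SeminormedAddCommGroup E]
    [NormedSpace ℝ E] {α : ℝ} (h₀ : 0 ≤ α) (h₁ : α ≤ 1) (u v : E) :
    ‖α • u + (1 - α) • v‖ ≤ max ‖u‖ ‖v‖ := by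
  calc ‖α • u + (1 - α) • v‖ ≤ α * ‖u‖ + (1 - α) * ‖v‖ := by
        refine (norm_add_le _ _).trans_eq ?_
        rw [norm_smul, norm_smul, Real.norm_of_nonneg h₀, Real.norm_of_nonneg (by linarith)]
    _ ≤ α * max ‖u‖ ‖v‖ + (1 - α) * max ‖u‖ ‖v‖ := by
        gcongr
        exacts [le_max_left _ _, le_max_right _ _]
    _ = max ‖u‖ ‖v‖ := by ring

theorem tendsto_of_limsup_coe_le_of_le {β : Type*} {f : Filter β} [f.NeBot] {u w : β → ℝ}
    {c : ℝ} (hu : limsup (fun n => (u n : EReal)) f ≤ c) (hwu : ∀ n, w n ≤ u n)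
    (hw : Tendsto w f (𝓝 c)) : Tendsto u f (𝓝 c) := by
  refine EReal.tendsto_coe.1 (tendsto_of_le_liminf_of_limsup_le ?_ hu)
  calc (c : EReal) = liminf (fun n => (w n : EReal)) f := (EReal.tendsto_coe.2 hw).liminf_eq.symm
    _ ≤ liminf (fun n => (u n : EReal)) f :=
        liminf_le_liminf (Eventually.of_forall fun n => EReal.coe_le_coe_iff.2 (hwu n))

theorem stmt_16_general {H : Type*} [NormedAddCommGroup H] [InnerProductSpace ℝ H]
    (a b : ℝ) (ha : 0 < a) (hb : b < 1)
    (αn : ℕ → ℝ) (hαn : ∀ n, a ≤ αn n ∧ αn n ≤ b)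
    (x y : ℕ → H) (c : ℝ)
    (hx : limsup (fun n => (‖x n‖ : EReal)) atTop ≤ (c : EReal))
    (hy : limsup (fun n => (‖y n‖ : EReal)) atTop ≤ (c : EReal))
    (hconv : Tendsto (fun n => ‖αn n • x n + (1 - αn n) • y n‖) atTop (𝓝 c)) :
    Tendsto (fun n => ‖x n - y n‖) atTop (𝓝 0) := by
  have hα₀ n : 0 ≤ αn n := ha.le.trans (hαn n).1
  have hα₁ n : αn n ≤ 1 := (hαn n).2.trans hb.le
  have hmax : Tendsto (fun n => max ‖x n‖ ‖y n‖) atTop (𝓝 c) := by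
    refine tendsto_of_limsup_coe_le_of_le ?_
      (fun n => norm_smul_add_one_sub_smul_le_max (hα₀ n) (hα₁ n) (x n) (y n)) hconv
    simp only [EReal.coe_strictMono.monotone.map_max]
    exact (limsup_max (β := EReal)).trans_le (max_le hx hy)
  have hK : 0 < a * (1 - b) := mul_pos ha (by linarith)
  have hgap : Tendsto (fun n => (max ‖x n‖ ‖y n‖ ^ 2 - ‖αn n • x n + (1 - αn n) • y n‖ ^ 2)
      / (a * (1 - b))) atTop (𝓝 0) := by
    simpa using ((hmax.pow 2).sub (hconv.pow 2)).div_const (a * (1 - b))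
  have hsq : Tendsto (fun n => ‖x n - y n‖ ^ 2) atTop (𝓝 0) := by
    refine squeeze_zero (fun n => sq_nonneg _) (fun n => ?_) hgap
    rw [le_div_iff₀' hK]
    have hKα : a * (1 - b) ≤ αn n * (1 - αn n) :=
      mul_le_mul (hαn n).1 (by linarith [(hαn n).2]) (by linarith) (hα₀ n)
    exact (mul_le_mul_of_nonneg_right hKα (sq_nonneg _)).trans
      (mul_one_sub_mul_norm_sub_sq_le (hα₀ n) (hα₁ n) (x n) (y n))
  simpa [Real.sqrt_sq (norm_nonneg _)] using hsq.sqrt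

/-- Schu's lemma: if `limsup ‖xₙ‖ ≤ c`, `limsup ‖yₙ‖ ≤ c` and
`‖αₙ xₙ + (1 - αₙ) yₙ‖ → c` with `0 < a ≤ αₙ ≤ b < 1`, then `‖xₙ - yₙ‖ → 0`. -/
theorem stmt_16 {H : Type*} [NormedAddCommGroup H] [InnerProductSpace ℝ H]
    (a b : ℝ) (ha : 0 < a) (hb : b < 1)
    (αn : ℕ → ℝ) (hαn : ∀ n, a ≤ αn n ∧ αn n ≤ b)
    (x y : ℕ → H) (c : ℝ) (hc : 0 < c)
    (hx : limsup (fun n => (‖x n‖ : EReal)) atTop ≤ (c : EReal))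
    (hy : limsup (fun n => (‖y n‖ : EReal)) atTop ≤ (c : EReal))
    (hconv : Tendsto (fun n => ‖αn n • x n + (1 - αn n) • y n‖) atTop (𝓝 c)) :
    Tendsto (fun n => ‖x n - y n‖) atTop (𝓝 0) :=
  stmt_16_general a b ha hb αn hαn x y c hx hy hconv
end

section
/- Let {x_n} be a sequence of nonnegative real numbers satisfying x_{n+1} ≤ (1 − α_n)x_n + α_n β_n for all n ≥ 0, where {α_n} ⊂ [0,1] with Σ_{n=0}^∞ α_n = ∞, and {β_n} is a sequence of real numbers with limsup_{n→∞} β_n ≤ 0. Then lim_{n→∞} x_n = 0. -/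
open Filter Topology

/-- Xu's lemma: if `x_{n+1} ≤ (1 - αₙ)xₙ + αₙβₙ` with `αₙ ∈ [0,1]`, `Σαₙ = ∞` and
`limsup βₙ ≤ 0`, then `xₙ → 0`. -/
theorem stmt_17 (x αn βn : ℕ → ℝ) (hx0 : ∀ n, 0 ≤ x n)
    (hαn : ∀ n, αn n ∈ Set.Icc (0 : ℝ) 1)
    (hsum : Tendsto (fun N => ∑ n ∈ Finset.range N, αn n) atTop atTop)
    (hβ : limsup (fun n => (βn n : EReal)) atTop ≤ 0)
    (hrec : ∀ n, x (n + 1) ≤ (1 - αn n) * x n + αn n * βn n) :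
    Tendsto x atTop (𝓝 0) := by
  rw [Metric.tendsto_atTop]
  intro ε hε
  have hc : (0:ℝ) < ε/2 := by linarith
  have hev : ∀ᶠ n in atTop, (βn n : EReal) < ((ε/2 : ℝ) : EReal) := by
    apply eventually_lt_of_limsup_lt
    · refine lt_of_le_of_lt hβ ?_
      exact_mod_cast hc
    · exact ⟨⊤, by simp⟩
  rw [eventually_atTop] at hev
  obtain ⟨N, hN⟩ := hev
  have hNβ : ∀ n, N ≤ n → βn n ≤ ε/2 := by
    intro n hn
    have := hN n hn
    exact le_of_lt (by exact_mod_cast this)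
  set P : ℕ → ℝ := fun k => ∏ j ∈ Finset.range k, (1 - αn (N + j)) with hPdef
  have hα01 : ∀ n, 0 ≤ αn n ∧ αn n ≤ 1 := fun n => (hαn n)
  have hP0 : ∀ k, 0 ≤ P k := by
    intro k
    apply Finset.prod_nonneg
    intro j _
    linarith [(hα01 (N + j)).2]
  have hP1 : ∀ k, P k ≤ 1 := by
    intro k
    apply Finset.prod_le_one
    · intro j _; linarith [(hα01 (N + j)).2]
    · intro j _; linarith [(hα01 (N + j)).1]
  have key : ∀ k, x (N + k) ≤ P k * x N + (1 - P k) * (ε/2) := by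
    intro k
    induction k with
    | zero => simp [hPdef]
    | succ k ih =>
      have hα := hα01 (N + k)
      have h1 := hrec (N + k)
      have hβk := hNβ (N + k) (Nat.le_add_right _ _)
      have hx := hx0 (N + k)
      have hPk0 := hP0 k
      have hPk1 := hP1 k
      have hstep : P (k + 1) = P k * (1 - αn (N + k)) := by
        rw [hPdef]; exact Finset.prod_range_succ _ _
      have hadd : N + (k + 1) = (N + k) + 1 := by ring
      rw [hadd, hstep]
      calc x ((N + k) + 1) ≤ (1 - αn (N + k)) * x (N + k) + αn (N + k) * βn (N + k) := h1
        _ ≤ (1 - αn (N + k)) * (P k * x N + (1 - P k) * (ε/2)) + αn (N + k) * (ε/2) := by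
            have h2 : (1 - αn (N + k)) * x (N + k) ≤ (1 - αn (N + k)) * (P k * x N + (1 - P k) * (ε/2)) := by
              apply mul_le_mul_of_nonneg_left ih; linarith [hα.2]
            have h3 : αn (N + k) * βn (N + k) ≤ αn (N + k) * (ε/2) :=
              mul_le_mul_of_nonneg_left hβk hα.1
            linarith
        _ = P k * (1 - αn (N + k)) * x N + (1 - P k * (1 - αn (N + k))) * (ε/2) := by ring
  -- P → 0
  have hS : Tendsto (fun k => ∑ j ∈ Finset.range k, αn (N + j)) atTop atTop := by
    have h1 : Tendsto (fun k => ∑ n ∈ Finset.range (k + N), αn n) atTop atTop :=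
      hsum.comp (tendsto_add_atTop_nat N)
    have h2 : ∀ k, ∑ j ∈ Finset.range k, αn (N + j)
        = (∑ n ∈ Finset.range (k + N), αn n) - ∑ n ∈ Finset.range N, αn n := by
      intro k
      rw [Nat.add_comm k N, Finset.sum_range_add]
      ring
    simp only [h2]
    exact tendsto_atTop_add_const_right _ _ h1
  have hPle : ∀ k, P k ≤ Real.exp (-(∑ j ∈ Finset.range k, αn (N + j))) := by
    intro k
    rw [← Finset.sum_neg_distrib, Real.exp_sum]
    apply Finset.prod_le_prod
    · intro j _; linarith [(hα01 (N + j)).2]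
    · intro j _
      have := Real.add_one_le_exp (-(αn (N + j)))
      linarith
  have hexp : Tendsto (fun k => Real.exp (-(∑ j ∈ Finset.range k, αn (N + j)))) atTop (𝓝 0) :=
    Real.tendsto_exp_atBot.comp (tendsto_neg_atBot_iff.mpr hS)
  have hPtend : Tendsto P atTop (𝓝 0) :=
    tendsto_of_tendsto_of_tendsto_of_le_of_le tendsto_const_nhds hexp hP0 hPle
  have hPx : Tendsto (fun k => P k * x N) atTop (𝓝 0) := by
    simpa using hPtend.mul_const (x N)
  have hPev : ∀ᶠ k in atTop, P k * x N < ε/4 := by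
    have := hPx.eventually (eventually_lt_nhds (show (0:ℝ) < ε/4 by linarith))
    simpa using this
  rw [eventually_atTop] at hPev
  obtain ⟨K, hK⟩ := hPev
  refine ⟨N + K, fun n hn => ?_⟩
  obtain ⟨k, rfl⟩ := Nat.exists_eq_add_of_le (Nat.le_trans (Nat.le_add_right N K) hn)
  have hk : K ≤ k := by omega
  have h1 := key k
  have h2 := hK k hk
  have h3 := hP0 k
  have h4 := hP1 k
  have : x (N + k) < ε := by nlinarith
  rw [Real.dist_eq, sub_zero, abs_of_nonneg (hx0 _)]
  exact this
end
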